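/- Let 𝒴_h ⊂ 𝒴 be a finite-dimensional subspace with orthogonal projection Π_{𝒴_h} : 𝒴 → 𝒴_h, let V_h be an N-dimensional subspace of L²_ρ(𝒳;𝒴_h), let f¹,…,f^M ∈ 𝒳 be arbitrary points, and let w : 𝒳 → (0,∞) be any weight function finite at each fⁱ. Suppose there exists δ ∈ (0,1) such that (1−δ)‖B‖²_{L²_ρ} ≤ ‖B‖²_{L²_{ρ,M}} for all B ∈ V_h. Then for any K ∈ L²_ρ(𝒳;𝒴) and any noise η ∈ L^∞_ρ(𝒳;𝒴) ∩ L²_ρ(𝒳;𝒴), the minimizer K̃_{V_h} of ‖K + η − A‖_{L²_{ρ,M}} over A ∈ V_h is unique and satisfies ‖K − K̃_{V_h}‖_{L²_ρ(𝒳;𝒴)} ≤ inf_{A ∈ V_h}{ ‖K − A‖_{L²_ρ(𝒳;𝒴)} + (1−δ)^{-1/2}‖K − A‖_{L²_{ρ,M}} } + ‖K − Π_{𝒴_h}K‖_{L²_ρ(𝒳;𝒴)} + (1−δ)^{-1/2}‖η‖_{L²_{ρ,M}}, where (Π_{𝒴_h}K)(f) := Π_{𝒴_h}(K(f)). -/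

import Mathlib

open MeasureTheory Filter
open scoped RealInnerProductSpace ENNReal BigOperators

noncomputable section

variable {X Y : Type*}

/-- Squared Bochner `L²_ρ` norm of a map `A : X → Y`:  `∫ ‖A f‖² dρ(f)`. -/
def contNormSq [MeasurableSpace X] [NormedAddCommGroup Y]
    (ρ : Measure X) (A : X → Y) : ℝ :=
  ∫ f, ‖A f‖ ^ 2 ∂ρ

/-- Bochner `L²_ρ` inner product:  `∫ ⟨A f, B f⟩_Y dρ(f)`. -/
def contInner [MeasurableSpace X] [NormedAddCommGroup Y] [InnerProductSpace ℝ Y]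
    (ρ : Measure X) (A B : X → Y) : ℝ :=
  ∫ f, ⟪A f, B f⟫ ∂ρ

/-- Discrete weighted squared semi-norm  `(1/M) Σᵢ w(fⁱ) ‖A(fⁱ)‖²`. -/
def discNormSq [NormedAddCommGroup Y] (M : ℕ) (fs : Fin M → X) (w : X → ℝ) (A : X → Y) : ℝ :=
  (M : ℝ)⁻¹ * ∑ i, w (fs i) * ‖A (fs i)‖ ^ 2

/-- Discrete weighted semi-inner product  `(1/M) Σᵢ w(fⁱ) ⟨A(fⁱ), B(fⁱ)⟩_Y`. -/
def discInner [NormedAddCommGroup Y] [InnerProductSpace ℝ Y]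
    (M : ℕ) (fs : Fin M → X) (w : X → ℝ) (A B : X → Y) : ℝ :=
  (M : ℝ)⁻¹ * ∑ i, w (fs i) * ⟪A (fs i), B (fs i)⟫

/-- Empirical Gram matrix `G_{jk} = ⟨Φ_k, Φ_j⟩_{L²_{ρ,M}}`. -/
def gramMat [NormedAddCommGroup Y] [InnerProductSpace ℝ Y] {ι : Type*} [Fintype ι]
    (M : ℕ) (fs : Fin M → X) (w : X → ℝ) (Φ : ι → X → Y) : Matrix ι ι ℝ :=
  Matrix.of fun j k => discInner M fs w (Φ k) (Φ j)

/-- Spectral (`ℓ² → ℓ²` operator) norm of a real square matrix. -/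
def specNorm {ι : Type*} [Fintype ι] [DecidableEq ι] (A : Matrix ι ι ℝ) : ℝ :=
  ‖Matrix.toEuclideanCLM (𝕜 := ℝ) A‖

/-- The weighted Nikolskii constant `κ_w^∞ = ess sup_ρ w(f) Σₙ ‖Φₙ(f)‖²` (valued in `ℝ≥0∞`). -/
def nikolskii [MeasurableSpace X] [NormedAddCommGroup Y] {ι : Type*} [Fintype ι]
    (ρ : Measure X) (w : X → ℝ) (Φ : ι → X → Y) : ℝ≥0∞ :=
  essSup (fun f => ENNReal.ofReal (w f * ∑ n, ‖Φ n f‖ ^ 2)) ρ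


section DiscHelpers
set_option linter.unusedSectionVars false

variable {X Y : Type*} [NormedAddCommGroup Y] [InnerProductSpace ℝ Y]
variable {M : ℕ} {fs : Fin M → X} {w : X → ℝ} {A B C R : X → Y}

lemma discInner_self : discInner M fs w A A = discNormSq M fs w A := by
  unfold discInner discNormSq
  congr 1
  exact Finset.sum_congr rfl fun i _ => by rw [real_inner_self_eq_norm_sq]

lemma discNormSq_nonneg (hw : ∀ f, 0 ≤ w f) : 0 ≤ discNormSq M fs w A := by
  unfold discNormSq
  apply mul_nonneg (by positivity)
  exact Finset.sum_nonneg fun i _ => mul_nonneg (hw _) (by positivity)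

lemma discInner_comm : discInner M fs w A B = discInner M fs w B A := by
  unfold discInner
  congr 1
  exact Finset.sum_congr rfl fun i _ => by rw [real_inner_comm]

lemma discInner_sub_left :
    discInner M fs w (fun x => A x - B x) C
      = discInner M fs w A C - discInner M fs w B C := by
  unfold discInner
  rw [← mul_sub, ← Finset.sum_sub_distrib]
  congr 1
  exact Finset.sum_congr rfl fun i _ => by rw [inner_sub_left]; ring

lemma discInner_add_right :
    discInner M fs w A (fun x => B x + C x)
      = discInner M fs w A B + discInner M fs w A C := by
  unfold discInner
  rw [← mul_add, ← Finset.sum_add_distrib]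
  congr 1
  exact Finset.sum_congr rfl fun i _ => by rw [inner_add_right]; ring

lemma discNormSq_congr {A B : X → Y} (h : ∀ x, A x = B x) :
    discNormSq M fs w A = discNormSq M fs w B := by
  rw [show A = B from funext h]

lemma discInner_congr_right {B' : X → Y} (h : ∀ x, B x = B' x) :
    discInner M fs w A B = discInner M fs w A B' := by
  rw [show B = B' from funext h]

lemma discNormSq_sub_rev :
    discNormSq M fs w (fun x => A x - B x) = discNormSq M fs w (fun x => B x - A x) := by
  unfold discNormSq
  congr 1
  exact Finset.sum_congr rfl fun i _ => by rw [norm_sub_rev]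

lemma discNormSq_neg : discNormSq M fs w (fun x => -(A x)) = discNormSq M fs w A := by
  unfold discNormSq
  congr 1
  exact Finset.sum_congr rfl fun i _ => by rw [norm_neg]

lemma discExpand (t : ℝ) :
    discNormSq M fs w (fun x => A x + t • B x)
      = discNormSq M fs w A + 2 * t * discInner M fs w A B
        + t ^ 2 * discNormSq M fs w B := by
  unfold discNormSq discInner
  have key : ∀ i : Fin M, w (fs i) * ‖A (fs i) + t • B (fs i)‖ ^ 2
      = w (fs i) * ‖A (fs i)‖ ^ 2 + 2 * t * (w (fs i) * ⟪A (fs i), B (fs i)⟫)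
        + t ^ 2 * (w (fs i) * ‖B (fs i)‖ ^ 2) := by
    intro i
    rw [norm_add_sq_real, real_inner_smul_right, norm_smul, Real.norm_eq_abs, mul_pow, sq_abs]
    ring
  rw [Finset.sum_congr rfl fun i _ => key i, Finset.sum_add_distrib, Finset.sum_add_distrib]
  simp only [← Finset.mul_sum]
  ring

lemma disc_CS (hw : ∀ f, 0 ≤ w f) :
    (discInner M fs w A B) ^ 2 ≤ discNormSq M fs w A * discNormSq M fs w B := by
  have h : ∀ t : ℝ, 0 ≤ discNormSq M fs w B * (t * t) + (2 * discInner M fs w A B) * t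
      + discNormSq M fs w A := by
    intro t
    have := discNormSq_nonneg (A := fun x => A x + t • B x) (M := M) (fs := fs) hw
    rw [discExpand] at this
    nlinarith [this]
  have hd := discrim_le_zero h
  unfold discrim at hd
  nlinarith [hd]

lemma discInner_le (hw : ∀ f, 0 ≤ w f) :
    discInner M fs w A B
      ≤ Real.sqrt (discNormSq M fs w A) * Real.sqrt (discNormSq M fs w B) := by
  have h1 : discInner M fs w A B ≤ |discInner M fs w A B| := le_abs_self _
  have h2 : |discInner M fs w A B| = Real.sqrt ((discInner M fs w A B) ^ 2) :=
    (Real.sqrt_sq_eq_abs _).symm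
  rw [← Real.sqrt_mul (discNormSq_nonneg hw)]
  calc discInner M fs w A B ≤ Real.sqrt ((discInner M fs w A B) ^ 2) := h2 ▸ h1
    _ ≤ _ := Real.sqrt_le_sqrt (disc_CS hw)

lemma sqrt_disc_add (hw : ∀ f, 0 ≤ w f) :
    Real.sqrt (discNormSq M fs w (fun x => A x + B x))
      ≤ Real.sqrt (discNormSq M fs w A) + Real.sqrt (discNormSq M fs w B) := by
  have h1 : discNormSq M fs w (fun x => A x + B x)
      ≤ (Real.sqrt (discNormSq M fs w A) + Real.sqrt (discNormSq M fs w B)) ^ 2 := by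
    have he : discNormSq M fs w (fun x => A x + B x)
        = discNormSq M fs w A + 2 * 1 * discInner M fs w A B + 1 ^ 2 * discNormSq M fs w B := by
      rw [← discExpand (A := A) (B := B) 1]; simp
    rw [he]
    have h2 := discInner_le (A := A) (B := B) (M := M) (fs := fs) hw
    have h3 := Real.sq_sqrt (discNormSq_nonneg (A := A) (M := M) (fs := fs) hw)
    have h4 := Real.sq_sqrt (discNormSq_nonneg (A := B) (M := M) (fs := fs) hw)
    nlinarith
  calc Real.sqrt (discNormSq M fs w (fun x => A x + B x))
      ≤ Real.sqrt ((Real.sqrt (discNormSq M fs w A) + Real.sqrt (discNormSq M fs w B)) ^ 2) :=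
        Real.sqrt_le_sqrt h1
    _ = _ := Real.sqrt_sq (by positivity)

lemma discInner_sum_right {ι : Type*} [Fintype ι] (c : ι → ℝ) (Φ : ι → X → Y) :
    discInner M fs w R (fun x => ∑ n, c n • Φ n x)
      = ∑ n, c n * discInner M fs w R (Φ n) := by
  have key : ∀ i : Fin M, (M:ℝ)⁻¹ * (w (fs i) * ⟪R (fs i), ∑ n, c n • Φ n (fs i)⟫)
      = ∑ n, (M:ℝ)⁻¹ * (c n * (w (fs i) * ⟪R (fs i), Φ n (fs i)⟫)) := by
    intro i
    rw [inner_sum, Finset.mul_sum, Finset.mul_sum]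
    exact Finset.sum_congr rfl fun n _ => by rw [real_inner_smul_right]; ring
  calc discInner M fs w R (fun x => ∑ n, c n • Φ n x)
      = ∑ i, (M:ℝ)⁻¹ * (w (fs i) * ⟪R (fs i), ∑ n, c n • Φ n (fs i)⟫) := by
        unfold discInner; rw [Finset.mul_sum]
    _ = ∑ i, ∑ n, (M:ℝ)⁻¹ * (c n * (w (fs i) * ⟪R (fs i), Φ n (fs i)⟫)) :=
        Finset.sum_congr rfl fun i _ => key i
    _ = ∑ n, ∑ i, (M:ℝ)⁻¹ * (c n * (w (fs i) * ⟪R (fs i), Φ n (fs i)⟫)) := Finset.sum_comm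
    _ = ∑ n, c n * discInner M fs w R (Φ n) := Finset.sum_congr rfl fun n _ => by
        unfold discInner
        rw [Finset.mul_sum, Finset.mul_sum]
        exact Finset.sum_congr rfl fun i _ => by ring

end DiscHelpers

section ContHelpers
set_option linter.unusedSectionVars false
variable {X Y : Type*} [MeasurableSpace X] [NormedAddCommGroup Y] [InnerProductSpace ℝ Y]
  {ρ : Measure X} {A B : X → Y}

lemma contNormSq_nonneg : 0 ≤ contNormSq ρ A :=
  integral_nonneg fun f => by positivity

lemma contNormSq_congr {A B : X → Y} (h : ∀ x, A x = B x) :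
    contNormSq ρ A = contNormSq ρ B := by
  rw [show A = B from funext h]

lemma sqrt_cont_eq (hA : MemLp A 2 ρ) :
    Real.sqrt (contNormSq ρ A) = ‖hA.toLp A‖ := by
  have h1 : contNormSq ρ A = ⟪hA.toLp A, hA.toLp A⟫ := by
    rw [L2.inner_def]
    refine (integral_congr_ae ?_).symm
    filter_upwards [hA.coeFn_toLp] with x hx
    rw [hx, real_inner_self_eq_norm_sq]
  rw [h1, real_inner_self_eq_norm_sq, Real.sqrt_sq (norm_nonneg _)]

lemma sqrt_cont_add (hA : MemLp A 2 ρ) (hB : MemLp B 2 ρ) :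
    Real.sqrt (contNormSq ρ (fun x => A x + B x))
      ≤ Real.sqrt (contNormSq ρ A) + Real.sqrt (contNormSq ρ B) := by
  have he : (fun x => A x + B x) = A + B := rfl
  rw [he, sqrt_cont_eq (hA.add hB), sqrt_cont_eq hA, sqrt_cont_eq hB,
    MemLp.toLp_add hA hB]
  exact norm_add_le _ _

end ContHelpers

/-- Linear combination `c ↦ ∑ n, c n • Φ n` used for canonical rewriting. -/
def lincomb {X Y : Type*} [AddCommMonoid Y] [SMul ℝ Y] {N : ℕ}
    (Φ : Fin N → X → Y) (c : Fin N → ℝ) : X → Y :=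
  fun x => ∑ n, c n • Φ n x


/-- **Theorem 7 (Truncated approximation error in probability).**
If the discrete semi-norm dominates `(1-δ)` times the `L²_ρ` norm on an `N`-dimensional subspace
`V_h ⊂ L²_ρ(𝒳;𝒴_h)` (spanned by `Φh` with values in a finite-dimensional subspace `𝒴_h ⊂ 𝒴`),
then the discrete weighted least-squares minimizer `K̃_{V_h}` is unique and satisfies
`‖K - K̃_{V_h}‖_{L²_ρ} ≤ inf_{A ∈ V_h} { ‖K-A‖_{L²_ρ} + (1-δ)^{-1/2}‖K-A‖_{L²_{ρ,M}} }
   + ‖K - Π_{𝒴_h}K‖_{L²_ρ} + (1-δ)^{-1/2}‖η‖_{L²_{ρ,M}}`. -/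
theorem truncated_approximation_error
    {X Y : Type*} [MeasurableSpace X] [NormedAddCommGroup Y] [InnerProductSpace ℝ Y]
    [CompleteSpace Y]
    (ρ : Measure X) [IsProbabilityMeasure ρ]
    (Yh : Submodule ℝ Y) [FiniteDimensional ℝ Yh]
    {N : ℕ} (Φh : Fin N → X → Y)
    (hΦrange : ∀ n x, Φh n x ∈ Yh)
    (hΦmem : ∀ n, MemLp (Φh n) 2 ρ)
    (hli : ∀ c : Fin N → ℝ, contNormSq ρ (fun x => ∑ n, c n • Φh n x) = 0 → c = 0)
    {M : ℕ} (fs : Fin M → X) (w : X → ℝ) (hw : ∀ f, 0 < w f)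
    (δ : ℝ) (hδ : δ ∈ Set.Ioo (0 : ℝ) 1)
    (hstab : ∀ c : Fin N → ℝ,
      (1 - δ) * contNormSq ρ (fun x => ∑ n, c n • Φh n x) ≤
        discNormSq M fs w (fun x => ∑ n, c n • Φh n x))
    (K η : X → Y) (hK : MemLp K 2 ρ) (hη : MemLp η 2 ρ)
    (hηbdd : ∃ C : ℝ, ∀ᵐ f ∂ρ, ‖η f‖ ≤ C) :
    ∃ cstar : Fin N → ℝ,
      (∀ c : Fin N → ℝ,
        discNormSq M fs w (fun x => (K x + η x) - ∑ n, cstar n • Φh n x) ≤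
          discNormSq M fs w (fun x => (K x + η x) - ∑ n, c n • Φh n x)) ∧
      (∀ c' : Fin N → ℝ,
        (∀ c : Fin N → ℝ,
          discNormSq M fs w (fun x => (K x + η x) - ∑ n, c' n • Φh n x) ≤
            discNormSq M fs w (fun x => (K x + η x) - ∑ n, c n • Φh n x)) → c' = cstar) ∧
      Real.sqrt (contNormSq ρ (fun x => K x - ∑ n, cstar n • Φh n x)) ≤
        (⨅ c : Fin N → ℝ,
          (Real.sqrt (contNormSq ρ (fun x => K x - ∑ n, c n • Φh n x)) +
            (Real.sqrt (1 - δ))⁻¹ *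
              Real.sqrt (discNormSq M fs w (fun x => K x - ∑ n, c n • Φh n x)))) +
        Real.sqrt (contNormSq ρ (fun x => K x - (Yh.orthogonalProjectionOnto (K x) : Y))) +
        (Real.sqrt (1 - δ))⁻¹ * Real.sqrt (discNormSq M fs w η) := by
  obtain ⟨hδ0, hδ1⟩ := hδ
  have h1δ : (0:ℝ) < 1 - δ := by linarith
  have hw' : ∀ f, 0 ≤ w f := fun f => (hw f).le
  suffices H : ∃ cstar : Fin N → ℝ,
      (∀ c : Fin N → ℝ,
        discNormSq M fs w (fun x => (K x + η x) - lincomb Φh cstar x) ≤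
          discNormSq M fs w (fun x => (K x + η x) - lincomb Φh c x)) ∧
      (∀ c' : Fin N → ℝ,
        (∀ c : Fin N → ℝ,
          discNormSq M fs w (fun x => (K x + η x) - lincomb Φh c' x) ≤
            discNormSq M fs w (fun x => (K x + η x) - lincomb Φh c x)) → c' = cstar) ∧
      Real.sqrt (contNormSq ρ (fun x => K x - lincomb Φh cstar x)) ≤
        (⨅ c : Fin N → ℝ,
          (Real.sqrt (contNormSq ρ (fun x => K x - lincomb Φh c x)) +
            (Real.sqrt (1 - δ))⁻¹ *
              Real.sqrt (discNormSq M fs w (fun x => K x - lincomb Φh c x)))) +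
        Real.sqrt (contNormSq ρ (fun x => K x - (Yh.orthogonalProjectionOnto (K x) : Y))) +
        (Real.sqrt (1 - δ))⁻¹ * Real.sqrt (discNormSq M fs w η) by
    exact H
  have hmemL : ∀ c : Fin N → ℝ, MemLp (lincomb Φh c) 2 ρ := fun c =>
    memLp_finset_sum Finset.univ (fun n _ => (hΦmem n).const_smul (c n))
  have hstabL : ∀ c : Fin N → ℝ,
      (1 - δ) * contNormSq ρ (lincomb Φh c) ≤ discNormSq M fs w (lincomb Φh c) := hstab
  have hliL : ∀ c : Fin N → ℝ, contNormSq ρ (lincomb Φh c) = 0 → c = 0 := hli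
  have hLsub : ∀ (c c' : Fin N → ℝ) (x : X),
      lincomb Φh (c - c') x = lincomb Φh c x - lincomb Φh c' x := by
    intro c c' x
    simp [lincomb, sub_smul, Finset.sum_sub_distrib]
  -- Gram matrix computations
  have hmulVec : ∀ (c : Fin N → ℝ) (j : Fin N),
      (gramMat M fs w Φh).mulVec c j = discInner M fs w (Φh j) (lincomb Φh c) := by
    intro c j
    rw [show discInner M fs w (Φh j) (lincomb Φh c)
        = ∑ n, c n * discInner M fs w (Φh j) (Φh n) from discInner_sum_right c Φh]
    simp only [Matrix.mulVec, dotProduct, gramMat, Matrix.of_apply]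
    exact Finset.sum_congr rfl fun k _ => by rw [discInner_comm]; ring
  have hDlin : ∀ c : Fin N → ℝ,
      discNormSq M fs w (lincomb Φh c) = ∑ j, c j * (gramMat M fs w Φh).mulVec c j := by
    intro c
    rw [← discInner_self (A := lincomb Φh c)]
    rw [show discInner M fs w (lincomb Φh c) (lincomb Φh c)
        = ∑ n, c n * discInner M fs w (lincomb Φh c) (Φh n) from discInner_sum_right c Φh]
    exact Finset.sum_congr rfl fun j _ => by rw [hmulVec, discInner_comm]
  have hker : ∀ c : Fin N → ℝ, (gramMat M fs w Φh).mulVec c = 0 → c = 0 := by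
    intro c hc
    have hD0 : discNormSq M fs w (lincomb Φh c) = 0 := by
      rw [hDlin c, hc]; simp
    have hC : contNormSq ρ (lincomb Φh c) = 0 := by
      have h1 := hstabL c
      have h2 : (0:ℝ) ≤ contNormSq ρ (lincomb Φh c) := contNormSq_nonneg
      nlinarith
    exact hliL c hC
  have hinj : Function.Injective (Matrix.mulVecLin (gramMat M fs w Φh)) := by
    rw [← LinearMap.ker_eq_bot, LinearMap.ker_eq_bot']
    intro c hc
    exact hker c hc
  have hsurj : Function.Surjective (Matrix.mulVecLin (gramMat M fs w Φh)) :=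
    LinearMap.injective_iff_surjective.mp hinj
  obtain ⟨cstar, hcstar⟩ := hsurj (fun j => discInner M fs w (fun x => K x + η x) (Φh j))
  have horthoΦ : ∀ j : Fin N,
      discInner M fs w (fun x => (K x + η x) - lincomb Φh cstar x) (Φh j) = 0 := by
    intro j
    have h1 : discInner M fs w (fun x => (K x + η x) - lincomb Φh cstar x) (Φh j)
        = discInner M fs w (fun x => K x + η x) (Φh j)
          - discInner M fs w (lincomb Φh cstar) (Φh j) :=
      discInner_sub_left (A := fun x => K x + η x) (B := lincomb Φh cstar) (C := Φh j)
    rw [h1]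
    have h2 : discInner M fs w (lincomb Φh cstar) (Φh j)
        = discInner M fs w (fun x => K x + η x) (Φh j) := by
      rw [discInner_comm, ← hmulVec]
      exact congrFun hcstar j
    rw [h2]; ring
  have horthoL : ∀ d : Fin N → ℝ,
      discInner M fs w (fun x => (K x + η x) - lincomb Φh cstar x) (lincomb Φh d) = 0 := by
    intro d
    rw [show discInner M fs w (fun x => (K x + η x) - lincomb Φh cstar x) (lincomb Φh d)
        = ∑ n, d n * discInner M fs w (fun x => (K x + η x) - lincomb Φh cstar x) (Φh n)
      from discInner_sum_right d Φh]
    simp only [horthoΦ, mul_zero, Finset.sum_const_zero]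
  have hdecomp : ∀ c : Fin N → ℝ,
      discNormSq M fs w (fun x => (K x + η x) - lincomb Φh c x)
        = discNormSq M fs w (fun x => (K x + η x) - lincomb Φh cstar x)
          + discNormSq M fs w (lincomb Φh (cstar - c)) := by
    intro c
    have hpt : ∀ x, (K x + η x) - lincomb Φh c x
        = ((K x + η x) - lincomb Φh cstar x) + (1:ℝ) • lincomb Φh (cstar - c) x := by
      intro x
      rw [one_smul, hLsub cstar c x]
      abel
    calc discNormSq M fs w (fun x => (K x + η x) - lincomb Φh c x)
        = discNormSq M fs w
            (fun x => ((K x + η x) - lincomb Φh cstar x) + (1:ℝ) • lincomb Φh (cstar - c) x) :=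
          discNormSq_congr hpt
      _ = discNormSq M fs w (fun x => (K x + η x) - lincomb Φh cstar x)
          + 2 * 1 * discInner M fs w (fun x => (K x + η x) - lincomb Φh cstar x)
              (lincomb Φh (cstar - c))
          + 1 ^ 2 * discNormSq M fs w (lincomb Φh (cstar - c)) :=
          discExpand (A := fun x => (K x + η x) - lincomb Φh cstar x)
            (B := lincomb Φh (cstar - c)) 1
      _ = _ := by rw [horthoL (cstar - c)]; ring
  refine ⟨cstar, ?_, ?_, ?_⟩
  · intro c
    have h1 := discNormSq_nonneg (M := M) (fs := fs) (A := lincomb Φh (cstar - c)) hw'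
    have h2 := hdecomp c
    linarith
  · intro c' hmin
    have h1 := hdecomp c'
    have h2 := hmin cstar
    have h3 : discNormSq M fs w (lincomb Φh (cstar - c')) = 0 := by
      have := discNormSq_nonneg (M := M) (fs := fs) (A := lincomb Φh (cstar - c')) hw'
      linarith
    have hC : contNormSq ρ (lincomb Φh (cstar - c')) = 0 := by
      have ha := hstabL (cstar - c')
      have hb : (0:ℝ) ≤ contNormSq ρ (lincomb Φh (cstar - c')) := contNormSq_nonneg
      nlinarith
    have h4 : cstar - c' = 0 := hliL _ hC
    exact (sub_eq_zero.mp h4).symm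
  · have hQ0 : 0 ≤ (Real.sqrt (1 - δ))⁻¹ := by positivity
    have hbound : ∀ c : Fin N → ℝ,
        Real.sqrt (contNormSq ρ (fun x => K x - lincomb Φh cstar x))
          - (Real.sqrt (1 - δ))⁻¹ * Real.sqrt (discNormSq M fs w η)
        ≤ Real.sqrt (contNormSq ρ (fun x => K x - lincomb Φh c x)) +
            (Real.sqrt (1 - δ))⁻¹ *
              Real.sqrt (discNormSq M fs w (fun x => K x - lincomb Φh c x)) := by
      intro c
      have hs1 : Real.sqrt (contNormSq ρ (fun x => K x - lincomb Φh cstar x))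
          ≤ Real.sqrt (contNormSq ρ (fun x => K x - lincomb Φh c x))
            + Real.sqrt (contNormSq ρ (lincomb Φh (c - cstar))) := by
        have hpt : ∀ x, K x - lincomb Φh cstar x
            = (K x - lincomb Φh c x) + lincomb Φh (c - cstar) x := by
          intro x; rw [hLsub c cstar x]; abel
        calc Real.sqrt (contNormSq ρ (fun x => K x - lincomb Φh cstar x))
            = Real.sqrt (contNormSq ρ (fun x => (K x - lincomb Φh c x) + lincomb Φh (c - cstar) x)) := by
              rw [contNormSq_congr hpt]
          _ ≤ _ := sqrt_cont_add (hK.sub (hmemL c)) (hmemL (c - cstar))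
      have hs2 : Real.sqrt (contNormSq ρ (lincomb Φh (c - cstar)))
          ≤ (Real.sqrt (1 - δ))⁻¹ * Real.sqrt (discNormSq M fs w (lincomb Φh (c - cstar))) := by
        have ha := hstabL (c - cstar)
        have hb : contNormSq ρ (lincomb Φh (c - cstar))
            ≤ (1 - δ)⁻¹ * discNormSq M fs w (lincomb Φh (c - cstar)) := by
          rw [inv_mul_eq_div, le_div_iff₀ h1δ]
          nlinarith
        calc Real.sqrt (contNormSq ρ (lincomb Φh (c - cstar)))
            ≤ Real.sqrt ((1 - δ)⁻¹ * discNormSq M fs w (lincomb Φh (c - cstar))) :=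
              Real.sqrt_le_sqrt hb
          _ = (Real.sqrt (1 - δ))⁻¹ * Real.sqrt (discNormSq M fs w (lincomb Φh (c - cstar))) := by
              rw [Real.sqrt_mul (by positivity), Real.sqrt_inv]
      have hs3 : Real.sqrt (discNormSq M fs w (lincomb Φh (c - cstar)))
          ≤ Real.sqrt (discNormSq M fs w (fun x => lincomb Φh c x - (K x + η x))) := by
        have hkey : discNormSq M fs w (lincomb Φh (c - cstar))
            ≤ Real.sqrt (discNormSq M fs w (lincomb Φh (c - cstar)))
              * Real.sqrt (discNormSq M fs w (fun x => lincomb Φh c x - (K x + η x))) := by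
          have hpt : ∀ x, lincomb Φh (c - cstar) x
              = (lincomb Φh c x - (K x + η x)) + ((K x + η x) - lincomb Φh cstar x) := by
            intro x; rw [hLsub c cstar x]; abel
          have e1 : discNormSq M fs w (lincomb Φh (c - cstar))
              = discInner M fs w (lincomb Φh (c - cstar))
                  (fun x => (lincomb Φh c x - (K x + η x)) + ((K x + η x) - lincomb Φh cstar x)) := by
            rw [← discInner_self]
            exact discInner_congr_right hpt
          have e2 : discInner M fs w (lincomb Φh (c - cstar))
                (fun x => (lincomb Φh c x - (K x + η x)) + ((K x + η x) - lincomb Φh cstar x))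
              = discInner M fs w (lincomb Φh (c - cstar)) (fun x => lincomb Φh c x - (K x + η x))
                + discInner M fs w (lincomb Φh (c - cstar))
                    (fun x => (K x + η x) - lincomb Φh cstar x) :=
            discInner_add_right (A := lincomb Φh (c - cstar))
              (B := fun x => lincomb Φh c x - (K x + η x))
              (C := fun x => (K x + η x) - lincomb Φh cstar x)
          have e3 : discInner M fs w (lincomb Φh (c - cstar))
              (fun x => (K x + η x) - lincomb Φh cstar x) = 0 := by
            rw [discInner_comm]; exact horthoL (c - cstar)
          have e4 := discInner_le (A := lincomb Φh (c - cstar))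
            (B := fun x => lincomb Φh c x - (K x + η x)) (M := M) (fs := fs) (w := w) hw'
          have e5 : discNormSq M fs w (lincomb Φh (c - cstar))
              = discInner M fs w (lincomb Φh (c - cstar))
                  (fun x => lincomb Φh c x - (K x + η x)) := by
            rw [e1, e2, e3]; ring
          linarith
        rcases le_or_gt (Real.sqrt (discNormSq M fs w (lincomb Φh (c - cstar)))) 0 with h | h
        · exact le_trans h (Real.sqrt_nonneg _)
        · have h2 : Real.sqrt (discNormSq M fs w (lincomb Φh (c - cstar)))
                * Real.sqrt (discNormSq M fs w (lincomb Φh (c - cstar)))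
              ≤ Real.sqrt (discNormSq M fs w (lincomb Φh (c - cstar)))
                * Real.sqrt (discNormSq M fs w (fun x => lincomb Φh c x - (K x + η x))) := by
            calc Real.sqrt (discNormSq M fs w (lincomb Φh (c - cstar)))
                  * Real.sqrt (discNormSq M fs w (lincomb Φh (c - cstar)))
                = discNormSq M fs w (lincomb Φh (c - cstar)) :=
                  Real.mul_self_sqrt (discNormSq_nonneg hw')
              _ ≤ _ := hkey
          exact le_of_mul_le_mul_left h2 h
      have hs4 : Real.sqrt (discNormSq M fs w (fun x => lincomb Φh c x - (K x + η x)))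
          ≤ Real.sqrt (discNormSq M fs w (fun x => K x - lincomb Φh c x))
            + Real.sqrt (discNormSq M fs w η) := by
        have hpt : ∀ x, lincomb Φh c x - (K x + η x) = (lincomb Φh c x - K x) + (-(η x)) := by
          intro x; abel
        have h1 : discNormSq M fs w (fun x => lincomb Φh c x - (K x + η x))
            = discNormSq M fs w (fun x => (lincomb Φh c x - K x) + (-(η x))) :=
          discNormSq_congr hpt
        have h2 : discNormSq M fs w (fun x => lincomb Φh c x - K x)
            = discNormSq M fs w (fun x => K x - lincomb Φh c x) := discNormSq_sub_rev
        have h3 : discNormSq M fs w (fun x => -(η x)) = discNormSq M fs w η := discNormSq_neg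
        calc Real.sqrt (discNormSq M fs w (fun x => lincomb Φh c x - (K x + η x)))
            = Real.sqrt (discNormSq M fs w (fun x => (lincomb Φh c x - K x) + (-(η x)))) := by
              rw [h1]
          _ ≤ Real.sqrt (discNormSq M fs w (fun x => lincomb Φh c x - K x))
              + Real.sqrt (discNormSq M fs w (fun x => -(η x))) := sqrt_disc_add hw'
          _ = _ := by rw [h2, h3]
      have hs5 : Real.sqrt (contNormSq ρ (lincomb Φh (c - cstar)))
          ≤ (Real.sqrt (1 - δ))⁻¹ *
              (Real.sqrt (discNormSq M fs w (fun x => K x - lincomb Φh c x))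
                + Real.sqrt (discNormSq M fs w η)) :=
        le_trans hs2 (mul_le_mul_of_nonneg_left (le_trans hs3 hs4) hQ0)
      rw [mul_add] at hs5
      linarith
    have hPi : 0 ≤ Real.sqrt
        (contNormSq ρ (fun x => K x - (Yh.orthogonalProjectionOnto (K x) : Y))) := Real.sqrt_nonneg _
    have hinf : Real.sqrt (contNormSq ρ (fun x => K x - lincomb Φh cstar x))
        - (Real.sqrt (1 - δ))⁻¹ * Real.sqrt (discNormSq M fs w η)
        ≤ ⨅ c : Fin N → ℝ,
          (Real.sqrt (contNormSq ρ (fun x => K x - lincomb Φh c x)) +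
            (Real.sqrt (1 - δ))⁻¹ *
              Real.sqrt (discNormSq M fs w (fun x => K x - lincomb Φh c x))) :=
      le_ciInf hbound
    linarith
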